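/- For odd n ≥ 3 and any integer i with ⌈(n−3)/4⌉ ≤ i ≤ (n−3)/2, the tree T^{(n+3)/2}_{i, (n−3)/2 − i} on n vertices is connected and has domination number (n−1)/2 = ⌊n/2⌋. -/
import Mathlib


/-- `D` is a dominating set of `G`: every vertex not in `D` is adjacent to a vertex of `D`. -/
def IsDomSet {V : Type*} (G : SimpleGraph V) (D : Set V) : Prop :=
  ∀ v : V, v ∉ D → ∃ u ∈ D, G.Adj u v

/-- The domination number of `G`: minimum cardinality of a dominating set. -/
noncomputable def domNum {V : Type*} [Fintype V] (G : SimpleGraph V) : ℕ :=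
  sInf {k | ∃ D : Set V, IsDomSet G D ∧ D.ncard = k}

/-- The spectral radius of a finite simple graph: the largest eigenvalue of its (real)
adjacency matrix, expressed as the supremum of the real spectrum. -/
noncomputable def specRad {V : Type*} [Finite V] (G : SimpleGraph V) : ℝ :=
  letI := Fintype.ofFinite V
  letI := Classical.decEq V
  letI := Classical.decRel G.Adj
  sSup (spectrum ℝ (G.adjMatrix ℝ))

/-- The caterpillar `T^{d+1}_{i,j}`: a path `u₀ u₁ ⋯ u_d` on `d+1` vertices (the `Sum.inl`
part), with one pendant vertex attached to each of the first `i` path vertices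
(indexed by `Fin i`) and one pendant vertex attached to each of the last `j` path vertices
(indexed by `Fin j`). It has `i + j + d + 1` vertices. -/
def Tcat (d i j : ℕ) : SimpleGraph (Fin (d + 1) ⊕ (Fin i ⊕ Fin j)) :=
  SimpleGraph.fromRel (fun a b =>
    match a, b with
    | Sum.inl u, Sum.inl v => (u : ℕ) + 1 = (v : ℕ)
    | Sum.inl u, Sum.inr (Sum.inl p) => (u : ℕ) = (p : ℕ)
    | Sum.inl u, Sum.inr (Sum.inr q) => (u : ℕ) = d + 1 - j + (q : ℕ)
    | _, _ => False)

namespace TcatAux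

variable (i j : ℕ)

lemma adj_path (u v : Fin (i+j+3)) (h : (u:ℕ) + 1 = (v:ℕ)) :
    (Tcat (i+j+2) i j).Adj (Sum.inl u) (Sum.inl v) := by
  rw [Tcat, SimpleGraph.fromRel_adj]
  refine ⟨?_, Or.inl h⟩
  simp only [ne_eq, Sum.inl.injEq, Fin.ext_iff]
  omega

lemma adj_pend1 (u : Fin (i+j+3)) (p : Fin i) (h : (u:ℕ) = (p:ℕ)) :
    (Tcat (i+j+2) i j).Adj (Sum.inl u) (Sum.inr (Sum.inl p)) := by
  rw [Tcat, SimpleGraph.fromRel_adj]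
  exact ⟨by simp, Or.inl h⟩

lemma adj_pend2 (u : Fin (i+j+3)) (q : Fin j) (h : (u:ℕ) = i+3+(q:ℕ)) :
    (Tcat (i+j+2) i j).Adj (Sum.inl u) (Sum.inr (Sum.inr q)) := by
  rw [Tcat, SimpleGraph.fromRel_adj]
  exact ⟨by simp, Or.inl (by omega)⟩

lemma nbr_pend1 {x} (p : Fin i) (h : (Tcat (i+j+2) i j).Adj x (Sum.inr (Sum.inl p))) :
    ∃ u : Fin (i+j+3), x = Sum.inl u ∧ (u:ℕ) = (p:ℕ) := by
  rw [Tcat, SimpleGraph.fromRel_adj] at h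
  rcases x with u | (p' | q')
  · exact ⟨u, rfl, by rcases h.2 with h | h; exact h; exact h.elim⟩
  · rcases h.2 with h | h <;> exact h.elim
  · rcases h.2 with h | h <;> exact h.elim

lemma nbr_pend2 {x} (q : Fin j) (h : (Tcat (i+j+2) i j).Adj x (Sum.inr (Sum.inr q))) :
    ∃ u : Fin (i+j+3), x = Sum.inl u ∧ (u:ℕ) = i+3+(q:ℕ) := by
  rw [Tcat, SimpleGraph.fromRel_adj] at h
  rcases x with u | (p' | q')
  · refine ⟨u, rfl, ?_⟩
    rcases h.2 with h | h
    · have := q.isLt; omega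
    · exact h.elim
  · rcases h.2 with h | h <;> exact h.elim
  · rcases h.2 with h | h <;> exact h.elim

lemma nbr_path {x} (v : Fin (i+j+3)) (h : (Tcat (i+j+2) i j).Adj x (Sum.inl v)) :
    (∃ u : Fin (i+j+3), x = Sum.inl u ∧ ((u:ℕ)+1 = v ∨ (v:ℕ)+1 = u)) ∨
    (∃ p : Fin i, x = Sum.inr (Sum.inl p) ∧ (v:ℕ) = p) ∨
    (∃ q : Fin j, x = Sum.inr (Sum.inr q) ∧ (v:ℕ) = i+3+(q:ℕ)) := by
  rw [Tcat, SimpleGraph.fromRel_adj] at h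
  rcases x with u | (p' | q')
  · exact Or.inl ⟨u, rfl, h.2⟩
  · refine Or.inr (Or.inl ⟨p', rfl, ?_⟩)
    rcases h.2 with h | h; exact h.elim; exact h
  · refine Or.inr (Or.inr ⟨q', rfl, ?_⟩)
    rcases h.2 with h | h
    · exact h.elim
    · have := q'.isLt; omega

/-- the `i+j+1`-element dominating set, as the range of an injective map -/
def fD : Fin (i+j+1) → Fin (i+j+3) ⊕ (Fin i ⊕ Fin j) := fun t =>
  Sum.inl (if (t:ℕ) < i then ⟨t, by omega⟩ else if (t:ℕ) = i then ⟨i+1, by omega⟩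
    else ⟨(t:ℕ)+2, by omega⟩)

lemma fD_inj : Function.Injective (fD i j) := by
  intro a b hab
  simp only [fD, Sum.inl.injEq] at hab
  have : (a:ℕ) = (b:ℕ) := by
    split_ifs at hab <;> simp_all [Fin.ext_iff] <;> omega
  exact Fin.ext this

lemma mem_fD (u : Fin (i+j+3)) (h : (u:ℕ) < i ∨ (u:ℕ) = i+1 ∨ i+3 ≤ (u:ℕ)) :
    Sum.inl u ∈ Set.range (fD i j) := by
  rcases h with h | h | h
  · exact ⟨⟨u, by omega⟩, by simp [fD, h, Fin.ext_iff]⟩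
  · refine ⟨⟨i, by omega⟩, ?_⟩
    simp [fD, Fin.ext_iff, h]
  · refine ⟨⟨(u:ℕ)-2, by omega⟩, ?_⟩
    have h1 : ¬ ((u:ℕ)-2 < i) := by omega
    have h2 : ¬ ((u:ℕ)-2 = i) := by omega
    simp [fD, h1, h2, Fin.ext_iff]
    omega

lemma isDom_fD : IsDomSet (Tcat (i+j+2) i j) (Set.range (fD i j)) := by
  intro v hv
  rcases v with u | (p | q)
  · have hu : (u:ℕ) = i ∨ (u:ℕ) = i + 2 := by
      by_contra hc
      push_neg at hc
      exact hv (mem_fD i j u (by have := u.isLt; omega))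
    refine ⟨Sum.inl ⟨i+1, by omega⟩, mem_fD i j _ (by simp), ?_⟩
    rcases hu with hu | hu
    · exact ((adj_path i j u ⟨i+1, by omega⟩ (by simp [hu]))).symm
    · exact adj_path i j ⟨i+1, by omega⟩ u (by simp [hu])
  · exact ⟨Sum.inl ⟨p, by omega⟩, mem_fD i j _ (Or.inl (by simp)),
      adj_pend1 i j _ p rfl⟩
  · exact ⟨Sum.inl ⟨i+3+q, by have := q.isLt; omega⟩,
      mem_fD i j _ (Or.inr (Or.inr (by simp))), adj_pend2 i j _ q rfl⟩

/-- classifier for the lower bound -/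
def cl : Fin (i+j+3) ⊕ (Fin i ⊕ Fin j) → ℕ
  | Sum.inl u => if (u:ℕ) < i then u else if (u:ℕ) ≤ i+2 then i+j else (u:ℕ) - 3
  | Sum.inr (Sum.inl p) => p
  | Sum.inr (Sum.inr q) => i + q

lemma key (D : Set (Fin (i+j+3) ⊕ (Fin i ⊕ Fin j))) (hD : IsDomSet (Tcat (i+j+2) i j) D)
    (t : ℕ) (ht : t < i+j+1) : ∃ x ∈ D, cl i j x = t := by
  rcases lt_or_ge t i with hti | hti
  · set v : Fin (i+j+3) ⊕ (Fin i ⊕ Fin j) := Sum.inr (Sum.inl ⟨t, hti⟩) with hv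
    by_cases hvD : v ∈ D
    · exact ⟨v, hvD, rfl⟩
    · obtain ⟨x, hxD, hadj⟩ := hD v hvD
      obtain ⟨u, rfl, hu⟩ := nbr_pend1 i j _ hadj
      refine ⟨_, hxD, ?_⟩
      simp only [cl]
      rw [if_pos (by omega)]
      exact hu
  · rcases lt_or_ge t (i+j) with htj | htj
    · set v : Fin (i+j+3) ⊕ (Fin i ⊕ Fin j) := Sum.inr (Sum.inr ⟨t - i, by omega⟩) with hv
      by_cases hvD : v ∈ D
      · refine ⟨v, hvD, ?_⟩
        simp only [hv, cl]
        omega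
      · obtain ⟨x, hxD, hadj⟩ := hD v hvD
        obtain ⟨u, rfl, hu⟩ := nbr_pend2 i j _ hadj
        refine ⟨_, hxD, ?_⟩
        simp only [cl, hu]
        have h1 : ¬ (i+3+(t-i) < i) := by omega
        have h2 : ¬ (i+3+(t-i) ≤ i+2) := by omega
        rw [if_neg h1, if_neg h2]
        omega
    · have htm : t = i + j := by omega
      set v : Fin (i+j+3) ⊕ (Fin i ⊕ Fin j) := Sum.inl ⟨i+1, by omega⟩ with hv
      by_cases hvD : v ∈ D
      · refine ⟨v, hvD, ?_⟩
        simp only [hv, cl]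
        simp only [if_neg (by omega : ¬ (i+1 < i)), if_pos (by omega : i+1 ≤ i+2)]
        omega
      · obtain ⟨x, hxD, hadj⟩ := hD v hvD
        rcases nbr_path i j _ hadj with ⟨u, rfl, hu⟩ | ⟨p, rfl, hp⟩ | ⟨q, rfl, hq⟩
        · refine ⟨_, hxD, ?_⟩
          simp only [Fin.val_mk] at hu
          simp only [cl]
          rw [if_neg (by omega), if_pos (by omega)]
          omega
        · exfalso; have := p.isLt; simp at hp; omega
        · exfalso; simp at hq; omega

lemma lower (D : Set (Fin (i+j+3) ⊕ (Fin i ⊕ Fin j))) (hD : IsDomSet (Tcat (i+j+2) i j) D) :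
    i + j + 1 ≤ D.ncard := by
  have key' : ∀ t : Fin (i+j+1), ∃ x, x ∈ D ∧ cl i j x = (t:ℕ) :=
    fun t => by obtain ⟨x, h1, h2⟩ := key i j D hD t t.isLt; exact ⟨x, h1, h2⟩
  set h : Fin (i+j+1) → Fin (i+j+3) ⊕ (Fin i ⊕ Fin j) := fun t => (key' t).choose with hh
  have hmem : ∀ t, h t ∈ D := fun t => (key' t).choose_spec.1
  have hcl : ∀ t, cl i j (h t) = (t:ℕ) := fun t => (key' t).choose_spec.2
  have hinj : Function.Injective h := by
    intro a b hab
    have : (a:ℕ) = (b:ℕ) := by rw [← hcl a, ← hcl b, hab]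
    exact Fin.ext this
  calc i + j + 1 = (Set.range h).ncard := by
        rw [← Nat.card_coe_set_eq, Nat.card_range_of_injective hinj,
          Nat.card_eq_fintype_card, Fintype.card_fin]
    _ ≤ D.ncard := Set.ncard_le_ncard (Set.range_subset_iff.2 hmem) (Set.toFinite D)

lemma domNum_eq : domNum (Tcat (i+j+2) i j) = i + j + 1 := by
  have hmem : i + j + 1 ∈ {k | ∃ D, IsDomSet (Tcat (i+j+2) i j) D ∧ D.ncard = k} := by
    refine ⟨Set.range (fD i j), isDom_fD i j, ?_⟩
    rw [← Nat.card_coe_set_eq, Nat.card_range_of_injective (fD_inj i j),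
      Nat.card_eq_fintype_card, Fintype.card_fin]
  refine le_antisymm (Nat.sInf_le hmem) (le_csInf ⟨_, hmem⟩ ?_)
  rintro k ⟨D, hD, rfl⟩
  exact lower i j D hD

lemma reach_inl : ∀ (k : ℕ) (hk : k < i+j+3),
    (Tcat (i+j+2) i j).Reachable (Sum.inl ⟨0, by omega⟩) (Sum.inl ⟨k, hk⟩) := by
  intro k
  induction k with
  | zero => intro hk; exact SimpleGraph.Reachable.refl _
  | succ k ih =>
    intro hk
    exact (ih (by omega)).trans (adj_path i j ⟨k, by omega⟩ ⟨k+1, hk⟩ rfl).reachable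

lemma tcat_connected : (Tcat (i+j+2) i j).Connected := by
  rw [SimpleGraph.connected_iff]
  have base : ∀ x, (Tcat (i+j+2) i j).Reachable (Sum.inl ⟨0, by omega⟩) x := by
    rintro (u | (p | q))
    · have := reach_inl i j u u.isLt
      simpa using this
    · exact (reach_inl i j p (by omega)).trans
        (adj_pend1 i j ⟨p, by omega⟩ p rfl).reachable
    · exact (reach_inl i j (i+3+q) (by have := q.isLt; omega)).trans
        (adj_pend2 i j ⟨i+3+q, by have := q.isLt; omega⟩ q rfl).reachable
  exact ⟨fun x y => (base x).symm.trans (base y), ⟨Sum.inl ⟨0, by omega⟩⟩⟩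

end TcatAux

/-- For odd `n ≥ 3` and `⌈(n−3)/4⌉ ≤ i ≤ (n−3)/2`, the tree `T^{(n+3)/2}_{i,(n−3)/2−i}`
has `n` vertices, is connected, and has domination number `(n−1)/2 = ⌊n/2⌋`. -/
theorem Tcat_connected_and_domNum (n i : ℕ) (hodd : Odd n) (h3 : 3 ≤ n)
    (hlo : (n - 3 + 3) / 4 ≤ i) (hhi : i ≤ (n - 3) / 2) :
    Fintype.card (Fin ((n + 1) / 2 + 1) ⊕ (Fin i ⊕ Fin ((n - 3) / 2 - i))) = n ∧
    (Tcat ((n + 1) / 2) i ((n - 3) / 2 - i)).Connected ∧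
    domNum (Tcat ((n + 1) / 2) i ((n - 3) / 2 - i)) = (n - 1) / 2 := by
  obtain ⟨m, hm⟩ := hodd
  subst hm
  have e1 : (2*m+1+1)/2 = i + ((2*m+1-3)/2 - i) + 2 := by omega
  rw [e1]
  refine ⟨?_, TcatAux.tcat_connected i _, ?_⟩
  · simp only [Fintype.card_sum, Fintype.card_fin]
    omega
  · rw [TcatAux.domNum_eq]
    omega
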